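/- Assume additionally that every P_j is traceless: Tr(P_j) = 0. Then for every s ∈ {+1, −1}^τ, the total probability of measuring the sum outcome s satisfies ∑_{m ∈ {+1, −1}^τ} Prob(m, m·s) = 1/|Ê| if s ∈ Ê, and ∑_{m ∈ {+1, −1}^τ} Prob(m, m·s) = 0 if s ∉ Ê, where |Ê| is the number of elements of Ê. In particular the outcome s can occur with nonzero probability only if s ∈ Ê. -/
import Mathlib



noncomputable section
open Matrix
open scoped Classical

/-- A sign `±1`, modelled as a unit of `ℤ`, coerced into `ℂ`. -/
def signC (u : ℤˣ) : ℂ := ((u : ℤ) : ℂ)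

/-- Measurement projector `Π_j(m_j) = (1 + m_j P_j)/2`. -/
def proj {d : ℕ} (A : Matrix (Fin d) (Fin d) ℂ) (u : ℤˣ) : Matrix (Fin d) (Fin d) ℂ :=
  (2⁻¹ : ℂ) • (1 + signC u • A)

/-- Chronologically ordered product of measurement projectors
`Π(m) = Π_t(m_t) ⋯ Π_1(m_1)` (0-indexed, latest measurement leftmost):
`PiOp P m t` is the product for the measurements `0, …, t`. -/
def PiOp {d : ℕ} (P : ℕ → Matrix (Fin d) (Fin d) ℂ) (m : ℕ → ℤˣ) :
    ℕ → Matrix (Fin d) (Fin d) ℂ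
  | 0 => proj (P 0) (m 0)
  | (t+1) => proj (P (t+1)) (m (t+1)) * PiOp P m t

/-- Extend a sign vector on `Fin τ` to all of `ℕ` by `+1`. -/
def extSign (τ : ℕ) (m : Fin τ → ℤˣ) : ℕ → ℤˣ :=
  fun j => if h : j < τ then m ⟨j, h⟩ else 1

/-- Joint probability of outcomes `m` in the monitored circuit and `m̄` in the
reversed measurement sequence of the distillation algorithm, starting from the
maximally mixed state: `Prob(m,m̄) = (1/d) Tr[Π(m)ᴴ Π(m̄) Π(m̄)ᴴ Π(m)]`. -/
def Prob (d τ : ℕ) (P : ℕ → Matrix (Fin d) (Fin d) ℂ) (m mb : Fin τ → ℤˣ) : ℂ :=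
  (d : ℂ)⁻¹ * Matrix.trace
    ((PiOp P (extSign τ m) (τ - 1))ᴴ * PiOp P (extSign τ mb) (τ - 1) *
      (PiOp P (extSign τ mb) (τ - 1))ᴴ * PiOp P (extSign τ m) (τ - 1))

/-- The multiplicative error vector `ê_i ∈ {±1}^τ`: `ê_i(j) = ε(i,j)` for
`j ≤ i` and `+1` for `j > i`. -/
def ehat {τ : ℕ} (ε : ℕ → ℕ → ℤˣ) (i : Fin τ) : Fin τ → ℤˣ :=
  fun j => if (j : ℕ) ≤ (i : ℕ) then ε (i : ℕ) (j : ℕ) else 1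

/-- The multiplicative error group `Ê ≤ ({±1}^τ, ·)` generated by the error
vectors `ê_1, …, ê_τ`. -/
def Ehat (τ : ℕ) (ε : ℕ → ℕ → ℤˣ) : Subgroup (Fin τ → ℤˣ) :=
  Subgroup.closure (Set.range (ehat ε))

lemma signC_mul (u v : ℤˣ) : signC (u * v) = signC u * signC v := by
  simp [signC]

lemma signC_mul_self (u : ℤˣ) : signC u * signC u = 1 := by
  rw [← signC_mul]; simp [signC]

lemma signC_conj (u : ℤˣ) : (starRingEnd ℂ) (signC u) = signC u := by
  rcases Int.units_eq_one_or u with h | h <;> simp [h, signC]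

lemma signC_neg (u : ℤˣ) : signC (-u) = -signC u := by simp [signC]

lemma signC_one : signC 1 = 1 := by simp [signC]

lemma units_neq_iff {u v : ℤˣ} : u ≠ v ↔ v = -u := by
  rcases Int.units_eq_one_or u with h1 | h1 <;> rcases Int.units_eq_one_or v with h2 | h2 <;>
    subst h1 <;> subst h2 <;> simp_all


section matrixlemmas
variable {d : ℕ} {A : Matrix (Fin d) (Fin d) ℂ}

lemma proj_conjTranspose (hA : Aᴴ = A) (u : ℤˣ) : (proj A u)ᴴ = proj A u := by
  simp [proj, conjTranspose_smul, conjTranspose_add, hA, signC_conj]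

lemma proj_mul_self (h : A * A = 1) (u : ℤˣ) : proj A u * proj A u = proj A u := by
  rcases Int.units_eq_one_or u with hu | hu <;> subst hu <;>
  · simp only [proj, signC, Units.val_one, Units.val_neg, Int.cast_one, Int.cast_neg,
      smul_mul_assoc, mul_smul_comm, add_mul, mul_add, one_mul, mul_one, smul_smul, h, smul_add]
    match_scalars <;> ring

lemma proj_mul_neg (h : A * A = 1) (u : ℤˣ) : proj A u * proj A (-u) = 0 := by
  rcases Int.units_eq_one_or u with hu | hu <;> subst hu <;>
  · simp only [proj, signC, Units.val_one, Units.val_neg, Int.cast_one, Int.cast_neg,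
      neg_neg, Int.cast_one,
      smul_mul_assoc, mul_smul_comm, add_mul, mul_add, one_mul, mul_one, smul_smul, h, smul_add]
    match_scalars <;> ring

lemma proj_mul_of_ne (h : A * A = 1) {u v : ℤˣ} (hne : u ≠ v) :
    proj A u * proj A v = 0 := by
  have hv : v = -u := units_neq_iff.mp hne
  subst hv
  exact proj_mul_neg h u

lemma proj_add_neg (u : ℤˣ) : proj A u + proj A (-u) = (1 : Matrix (Fin d) (Fin d) ℂ) := by
  rcases Int.units_eq_one_or u with hu | hu <;> subst hu <;>
  · simp only [proj, signC, Units.val_one, Units.val_neg, Int.cast_one, Int.cast_neg,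
      neg_neg, smul_add, smul_smul]
    match_scalars <;> ring

lemma proj_mul_A (h : A * A = 1) (u : ℤˣ) : proj A u * A = signC u • proj A u := by
  rcases Int.units_eq_one_or u with hu | hu <;> subst hu <;>
  · simp only [proj, signC, Units.val_one, Units.val_neg, Int.cast_one, Int.cast_neg,
      smul_mul_assoc, add_mul, one_mul, smul_smul, h, smul_add]
    match_scalars <;> ring

lemma proj_conj_add (h : A * A = 1) (hA : Aᴴ = A) (u : ℤˣ) (X : Matrix (Fin d) (Fin d) ℂ) :
    proj A u * X * (proj A u)ᴴ + proj A (-u) * X * (proj A (-u))ᴴ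
      = (2⁻¹ : ℂ) • (X + A * X * A) := by
  rw [proj_conjTranspose hA, proj_conjTranspose hA]
  rcases Int.units_eq_one_or u with hu | hu <;> subst hu <;>
  · simp only [proj, signC, Units.val_one, Units.val_neg, Int.cast_one, Int.cast_neg,
      neg_neg, smul_mul_assoc, mul_smul_comm, add_mul, mul_add, one_mul, mul_one,
      smul_smul, smul_add]
    match_scalars <;> ring

end matrixlemmas

section piop
variable {d : ℕ} {P : ℕ → Matrix (Fin d) (Fin d) ℂ}

lemma PiOp_congr {n n' : ℕ → ℤˣ} : ∀ t, (∀ j ≤ t, n j = n' j) →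
    PiOp P n t = PiOp P n' t := by
  intro t
  induction t with
  | zero => intro h; simp [PiOp, h 0 le_rfl]
  | succ t ih =>
    intro h
    simp only [PiOp, h (t+1) le_rfl, ih (fun j hj => h j (hj.trans (Nat.le_succ t)))]

variable (ε : ℕ → ℕ → ℤˣ) (hcomm : ∀ i j, P i * P j = signC (ε i j) • (P j * P i))

include hcomm in
lemma A_mul_proj (i j : ℕ) (u : ℤˣ) :
    P i * proj (P j) u = proj (P j) (ε i j * u) * P i := by
  simp only [proj, mul_smul_comm, smul_mul_assoc, mul_add, add_mul, mul_one, one_mul,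
    hcomm i j, smul_smul, signC_mul]
  congr 2
  ring

include hcomm in
lemma P_mul_PiOp (i : ℕ) (n : ℕ → ℤˣ) : ∀ t,
    P i * PiOp P n t = PiOp P (fun j => ε i j * n j) t * P i := by
  intro t
  induction t with
  | zero => simpa [PiOp] using A_mul_proj ε hcomm i 0 (n 0)
  | succ t ih =>
    simp only [PiOp, ← mul_assoc, A_mul_proj ε hcomm i (t+1) (n (t+1))]
    rw [mul_assoc, ih, ← mul_assoc]

end piop

section absorb
variable {d : ℕ} {P : ℕ → Matrix (Fin d) (Fin d) ℂ}
variable (ε : ℕ → ℕ → ℤˣ)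
variable (hinv : ∀ j, P j * P j = 1)
variable (hεdiag : ∀ i, ε i i = 1)
variable (hcomm : ∀ i j, P i * P j = signC (ε i j) • (P j * P i))

include hinv hεdiag hcomm in
lemma PiOp_mul_P (i : ℕ) (n : ℕ → ℤˣ) : ∀ t, i ≤ t →
    PiOp P n t * P i
      = signC (n i) • PiOp P (fun j => if j ≤ i then ε i j * n j else n j) t := by
  intro t
  induction t with
  | zero =>
    intro hit
    interval_cases i
    simp [PiOp, proj_mul_A (hinv 0), hεdiag 0]
  | succ t ih =>
    intro hit
    rcases Nat.lt_or_ge i (t+1) with hlt | hge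
    · -- i ≤ t, use step
      have hit' : i ≤ t := Nat.lt_succ_iff.mp hlt
      simp only [PiOp, mul_assoc, ih hit', mul_smul_comm]
      congr 2
      have : ¬ (t+1 ≤ i) := by omega
      simp [this]
    · -- i = t+1 : base case
      have hi : i = t + 1 := le_antisymm hit hge
      subst hi
      -- PiOp n (t+1) * P (t+1) = proj (P (t+1)) (n (t+1)) * (PiOp P n t * P (t+1))
      simp only [PiOp, mul_assoc]
      have hswap : PiOp P n t * P (t+1)
          = P (t+1) * PiOp P (fun j => ε (t+1) j * n j) t := by
        rw [P_mul_PiOp ε hcomm (t+1) (fun j => ε (t+1) j * n j) t]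
        congr 1
        apply PiOp_congr
        intro j _
        rw [← mul_assoc, Int.units_mul_self, one_mul]
      rw [hswap, ← mul_assoc, proj_mul_A (hinv (t+1)), smul_mul_assoc]
      congr 2
      · simp [hεdiag (t+1)]
      · apply PiOp_congr
        intro j hj
        have : j ≤ t + 1 := by omega
        simp [this]
end absorb

section vlemma
variable {τ : ℕ}

def trunc (τ t : ℕ) (s : Fin τ → ℤˣ) : Fin τ → ℤˣ := fun j => if (j : ℕ) ≤ t then s j else 1

def Etr (τ : ℕ) (ε : ℕ → ℕ → ℤˣ) (t : ℕ) : Subgroup (Fin τ → ℤˣ) :=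
  Subgroup.closure {x | ∃ i : Fin τ, (i : ℕ) ≤ t ∧ ehat ε i = x}

lemma Etr_mono (ε : ℕ → ℕ → ℤˣ) {t t' : ℕ} (h : t ≤ t') : Etr τ ε t ≤ Etr τ ε t' :=
  Subgroup.closure_mono (fun x ⟨i, hi, hx⟩ => ⟨i, hi.trans h, hx⟩)

lemma extSign_lt {m : Fin τ → ℤˣ} {j : ℕ} (h : j < τ) : extSign τ m j = m ⟨j, h⟩ := by
  simp [extSign, h]


variable {d : ℕ} {P : ℕ → Matrix (Fin d) (Fin d) ℂ}
variable (ε : ℕ → ℕ → ℤˣ)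
variable (hherm : ∀ j, (P j)ᴴ = P j)
variable (hinv : ∀ j, P j * P j = 1)
variable (hεdiag : ∀ i, ε i i = 1)
variable (hcomm : ∀ i j, P i * P j = signC (ε i j) • (P j * P i))

include hherm hinv hεdiag hcomm in
lemma V_lemma : ∀ t, t < τ → ∀ m mb : Fin τ → ℤˣ,
    trunc τ t (m * mb) ∉ Etr τ ε t →
    (PiOp P (extSign τ mb) t)ᴴ * PiOp P (extSign τ m) t = 0 := by
  intro t
  induction t with
  | zero =>
    intro h0 m mb hne
    have hv : mb ⟨0, h0⟩ = -(m ⟨0, h0⟩) := by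
      rw [← units_neq_iff]
      intro heq
      apply hne
      have : trunc τ 0 (m * mb) = 1 := by
        funext j
        simp only [trunc, Pi.mul_apply, Pi.one_apply]
        split
        · next hj =>
          have : j = ⟨0, h0⟩ := by
            apply Fin.ext; simpa using hj
          subst this
          rw [heq, Int.units_mul_self]
        · rfl
      rw [this]
      exact one_mem _
    simp only [PiOp, extSign_lt h0]
    rw [proj_conjTranspose (hherm 0)]
    apply proj_mul_of_ne (hinv 0)
    rw [hv]; simp
  | succ t ih =>
    intro h1 m mb hne
    have ht : t < τ := Nat.lt_of_succ_lt h1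
    simp only [PiOp, conjTranspose_mul, proj_conjTranspose (hherm (t+1)), extSign_lt h1]
    rw [mul_assoc, ← mul_assoc (proj (P (t+1)) (mb ⟨t+1, h1⟩))]
    by_cases hab : mb ⟨t+1, h1⟩ = m ⟨t+1, h1⟩
    · -- equal outcomes at step t+1
      rw [hab, proj_mul_self (hinv (t+1))]
      -- abbreviations
      set Qm := PiOp P (extSign τ m) t with hQm
      set Qb := PiOp P (extSign τ mb) t with hQb
      have hab1 : (m * mb) ⟨t+1, h1⟩ = 1 := by
        rw [Pi.mul_apply, hab, Int.units_mul_self]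
      -- condition 1
      have hc1 : trunc τ t (m * mb) ∉ Etr τ ε t := by
        intro hmem
        apply hne
        have heq : trunc τ (t+1) (m * mb) = trunc τ t (m * mb) := by
          funext j
          simp only [trunc]
          rcases Nat.lt_trichotomy (j : ℕ) (t+1) with hj | hj | hj
          · have hj1 : (j : ℕ) ≤ t + 1 := by omega
            have hj2 : (j : ℕ) ≤ t := by omega
            simp [hj1, hj2]
          · have hj1 : (j : ℕ) ≤ t + 1 := by omega
            have hj2 : ¬ (j : ℕ) ≤ t := by omega
            have hjj : j = ⟨t+1, h1⟩ := Fin.ext (by simpa using hj)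
            simp [hj1, hj2, hjj, hab1]
          · have hj1 : ¬ (j : ℕ) ≤ t + 1 := by omega
            have hj2 : ¬ (j : ℕ) ≤ t := by omega
            simp [hj1, hj2]
        rw [heq]
        exact Etr_mono ε (Nat.le_succ t) hmem
      -- condition 2
      set eh := ehat ε (⟨t+1, h1⟩ : Fin τ) with heh
      have hehmem : eh ∈ Etr τ ε (t+1) :=
        Subgroup.subset_closure ⟨⟨t+1, h1⟩, le_rfl, rfl⟩
      have hc2 : trunc τ t ((m * eh) * mb) ∉ Etr τ ε t := by
        intro hmem
        apply hne
        have heq : trunc τ (t+1) (m * mb) = trunc τ t ((m * eh) * mb) * eh := by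
          funext j
          simp only [trunc, Pi.mul_apply, heh, ehat]
          rcases Nat.lt_trichotomy (j : ℕ) (t+1) with hj | hj | hj
          · have hj1 : (j : ℕ) ≤ t + 1 := by omega
            have hj2 : (j : ℕ) ≤ t := by omega
            simp only [hj1, hj2, if_true]
            rcases Int.units_eq_one_or (ε (t+1) (j : ℕ)) with h | h <;>
              rw [h] <;> simp [mul_comm, mul_left_comm, mul_assoc]
          · have hj1 : (j : ℕ) ≤ t + 1 := by omega
            have hj2 : ¬ (j : ℕ) ≤ t := by omega
            have hjj : j = ⟨t+1, h1⟩ := Fin.ext (by simpa using hj)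
            subst hjj
            simp only [hj2, if_false, hj1, if_true, one_mul]
            simpa [hεdiag] using hab1
          · have hj1 : ¬ (j : ℕ) ≤ t + 1 := by omega
            have hj2 : ¬ (j : ℕ) ≤ t := by omega
            simp [hj1, hj2]
        rw [heq]
        exact mul_mem (Etr_mono ε (Nat.le_succ t) hmem) hehmem
      -- swap lemma
      have hswap : P (t+1) * Qm = PiOp P (extSign τ (m * eh)) t * P (t+1) := by
        rw [hQm, P_mul_PiOp ε hcomm (t+1) (extSign τ m) t]
        congr 1
        apply PiOp_congr
        intro j hj
        have hjτ : j < τ := by omega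
        rw [extSign_lt hjτ, extSign_lt hjτ, Pi.mul_apply, heh, ehat]
        have : j ≤ t + 1 := by omega
        simp only [this, if_true]
        exact mul_comm _ _
      -- expand proj and conclude
      have hih1 : Qbᴴ * Qm = 0 := ih ht m mb hc1
      have hih2 : Qbᴴ * PiOp P (extSign τ (m * eh)) t = 0 := ih ht (m * eh) mb hc2
      calc Qbᴴ * (proj (P (t+1)) (m ⟨t+1, h1⟩) * Qm)
          = (2⁻¹ : ℂ) • (Qbᴴ * Qm)
            + (2⁻¹ * signC (m ⟨t+1, h1⟩)) • (Qbᴴ * (PiOp P (extSign τ (m * eh)) t * P (t+1))) := by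
            rw [← hswap]
            simp only [proj, smul_mul_assoc, add_mul, one_mul, mul_add, mul_smul_comm,
              smul_add, smul_smul]
        _ = 0 := by
            rw [hih1, ← mul_assoc, hih2]
            simp
    · rw [proj_mul_of_ne (hinv (t+1)) hab, zero_mul, mul_zero]
end vlemma

section coset
variable {d τ : ℕ} {P : ℕ → Matrix (Fin d) (Fin d) ℂ}
variable (ε : ℕ → ℕ → ℤˣ)
variable (hherm : ∀ j, (P j)ᴴ = P j)
variable (hinv : ∀ j, P j * P j = 1)
variable (hεdiag : ∀ i, ε i i = 1)
variable (hcomm : ∀ i j, P i * P j = signC (ε i j) • (P j * P i))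

include hinv hεdiag hcomm in
lemma PiOp_mul_P_fin (hτ : 1 ≤ τ) (i : Fin τ) (m : Fin τ → ℤˣ) :
    PiOp P (extSign τ m) (τ - 1) * P (i : ℕ)
      = signC (m i) • PiOp P (extSign τ (m * ehat ε i)) (τ - 1) := by
  have hi : (i : ℕ) ≤ τ - 1 := by omega
  rw [PiOp_mul_P ε hinv hεdiag hcomm (i : ℕ) (extSign τ m) (τ - 1) hi]
  have hv : extSign τ m (i : ℕ) = m i := by
    rw [extSign_lt i.isLt]
  rw [hv]
  congr 1
  apply PiOp_congr
  intro j hj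
  have hjτ : j < τ := by omega
  rw [extSign_lt hjτ]
  simp only [Pi.mul_apply, ehat, extSign, hjτ, dif_pos]
  split
  · exact mul_comm _ _
  · simp

include hherm hinv hεdiag hcomm in
lemma rho_coset (hτ : 1 ≤ τ) (e : Fin τ → ℤˣ) (he : e ∈ Ehat τ ε) (m : Fin τ → ℤˣ) :
    PiOp P (extSign τ (m * e)) (τ - 1) * (PiOp P (extSign τ (m * e)) (τ - 1))ᴴ
      = PiOp P (extSign τ m) (τ - 1) * (PiOp P (extSign τ m) (τ - 1))ᴴ := by
  induction he using Subgroup.closure_induction generalizing m with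
  | mem x hx =>
    obtain ⟨i, rfl⟩ := hx
    have hrel := PiOp_mul_P_fin ε hinv hεdiag hcomm hτ i m
    have h2 : PiOp P (extSign τ (m * ehat ε i)) (τ - 1)
        = signC (m i) • (PiOp P (extSign τ m) (τ - 1) * P (i : ℕ)) := by
      rw [hrel, smul_smul, signC_mul_self, one_smul]
    rw [h2]
    have hst : signC (m i) * star (signC (m i)) = 1 := by
      rcases Int.units_eq_one_or (m i) with h | h <;> simp [h, signC]
    rw [conjTranspose_smul, smul_mul_assoc, mul_smul_comm, smul_smul, hst, one_smul,
      conjTranspose_mul, hherm]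
    rw [mul_assoc, ← mul_assoc (P (i : ℕ)), hinv, one_mul]
  | one => simp
  | mul x y hx hy ihx ihy =>
    rw [(mul_assoc m x y).symm, ihy, ihx]
  | inv x hx ihx =>
    have : x⁻¹ = x := by
      funext j
      rcases Int.units_eq_one_or (x j) with h | h <;> simp [Pi.inv_apply, h]
    rw [this]
    exact ihx m
end coset

section channel
variable {d τ : ℕ} {P : ℕ → Matrix (Fin d) (Fin d) ℂ}
variable (hherm : ∀ j, (P j)ᴴ = P j)
variable (hinv : ∀ j, P j * P j = 1)

/-- the flip character at a coordinate -/
def flipAt (τ : ℕ) (k : Fin τ) : Fin τ → ℤˣ := fun j => if j = k then -1 else 1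

lemma sum_flip {M : Type*} [AddCommMonoid M] (k : Fin τ) (F : (Fin τ → ℤˣ) → M) :
    ∑ m : Fin τ → ℤˣ, F (flipAt τ k * m) = ∑ m : Fin τ → ℤˣ, F m :=
  Fintype.sum_equiv (Equiv.mulLeft (flipAt τ k)) _ _ (fun _ => rfl)

lemma extSign_flip_ne (k : Fin τ) (m : Fin τ → ℤˣ) {j : ℕ} (hj : j ≠ (k : ℕ)) :
    extSign τ (flipAt τ k * m) j = extSign τ m j := by
  unfold extSign
  split
  · next h =>
    simp only [Pi.mul_apply, flipAt]
    have : (⟨j, h⟩ : Fin τ) ≠ k := by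
      intro hc; apply hj; rw [← hc]
    simp [this]
  · rfl

lemma extSign_flip_eq (k : Fin τ) (m : Fin τ → ℤˣ) :
    extSign τ (flipAt τ k * m) (k : ℕ) = -(extSign τ m (k : ℕ)) := by
  unfold extSign
  have h : (k : ℕ) < τ := k.isLt
  simp only [h, dif_pos, Pi.mul_apply, flipAt]
  have : (⟨(k : ℕ), h⟩ : Fin τ) = k := by apply Fin.ext; rfl
  simp [this]

include hherm hinv in
lemma sum_rho : ∀ t, t < τ →
    ∑ m : Fin τ → ℤˣ, PiOp P (extSign τ m) t * (PiOp P (extSign τ m) t)ᴴ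
      = ((2 : ℂ) ^ (τ - 1 - t)) • (1 : Matrix (Fin d) (Fin d) ℂ) := by
  intro t
  induction t with
  | zero =>
    intro h0
    set F := fun m : Fin τ → ℤˣ => PiOp P (extSign τ m) 0 * (PiOp P (extSign τ m) 0)ᴴ with hF
    set k : Fin τ := ⟨0, h0⟩ with hk
    have hFm : ∀ m, F m = proj (P 0) (extSign τ m 0) := by
      intro m
      rw [hF]
      simp only [PiOp]
      rw [proj_conjTranspose (hherm 0), proj_mul_self (hinv 0)]
    have hpair : ∀ m, F m + F (flipAt τ k * m) = 1 := by
      intro m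
      rw [hFm, hFm]
      have : extSign τ (flipAt τ k * m) 0 = -(extSign τ m 0) := extSign_flip_eq k m
      rw [this, proj_add_neg]
    have h2 : (∑ m : Fin τ → ℤˣ, F m) + (∑ m : Fin τ → ℤˣ, F m)
        = ((2 : ℂ) ^ τ) • 1 := by
      nth_rewrite 2 [← sum_flip k F]
      rw [← Finset.sum_add_distrib]
      rw [Finset.sum_congr rfl (fun m _ => hpair m)]
      rw [Finset.sum_const, Finset.card_univ]
      have hc : Fintype.card (Fin τ → ℤˣ) = 2 ^ τ := by simp
      rw [hc, ← Nat.cast_smul_eq_nsmul ℂ]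
      norm_num
    have hτ1 : τ = (τ - 1 - 0) + 1 := by omega
    have : (2 : ℂ) ^ τ = 2 * (2 : ℂ) ^ (τ - 1 - 0) := by
      nth_rewrite 1 [hτ1]
      rw [pow_succ]; ring
    rw [this] at h2
    have h3 : (2 : ℂ) • (∑ m : Fin τ → ℤˣ, F m) = (2 * (2 : ℂ) ^ (τ - 1 - 0)) • 1 := by
      rw [two_smul]; exact h2
    have h4 := congrArg (fun X => (2⁻¹ : ℂ) • X) h3
    simpa [smul_smul] using h4
  | succ t ih =>
    intro h1
    have ht : t < τ := Nat.lt_of_succ_lt h1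
    set k : Fin τ := ⟨t+1, h1⟩ with hk
    set F := fun m : Fin τ → ℤˣ =>
      PiOp P (extSign τ m) (t+1) * (PiOp P (extSign τ m) (t+1))ᴴ with hF
    set g := fun m : Fin τ → ℤˣ =>
      PiOp P (extSign τ m) t * (PiOp P (extSign τ m) t)ᴴ with hg
    have hFm : ∀ m, F m = proj (P (t+1)) (extSign τ m (t+1)) * g m
        * (proj (P (t+1)) (extSign τ m (t+1)))ᴴ := by
      intro m
      rw [hF, hg]
      simp only [PiOp, conjTranspose_mul]
      rw [proj_conjTranspose (hherm (t+1))]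
      noncomm_ring
    have hgflip : ∀ m, g (flipAt τ k * m) = g m := by
      intro m
      rw [hg]
      have : PiOp P (extSign τ (flipAt τ k * m)) t = PiOp P (extSign τ m) t := by
        apply PiOp_congr
        intro j hj
        exact extSign_flip_ne k m (by simp [hk]; omega)
      simp only [this]
    have hpair : ∀ m, F m + F (flipAt τ k * m)
        = (2⁻¹ : ℂ) • (g m + P (t+1) * g m * P (t+1)) := by
      intro m
      rw [hFm, hFm, hgflip]
      have hflip : extSign τ (flipAt τ k * m) (t+1) = -(extSign τ m (t+1)) :=
        extSign_flip_eq k m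
      rw [hflip]
      rw [proj_conjTranspose (hherm (t+1)), proj_conjTranspose (hherm (t+1))]
      have := proj_conj_add (hinv (t+1)) (hherm (t+1)) (extSign τ m (t+1)) (g m)
      rw [proj_conjTranspose (hherm (t+1)), proj_conjTranspose (hherm (t+1))] at this
      exact this
    have h2 : (∑ m : Fin τ → ℤˣ, F m) + (∑ m : Fin τ → ℤˣ, F m)
        = (2⁻¹ : ℂ) • ((∑ m : Fin τ → ℤˣ, g m) + P (t+1) * (∑ m : Fin τ → ℤˣ, g m) * P (t+1)) := by
      nth_rewrite 2 [← sum_flip k F]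
      rw [← Finset.sum_add_distrib]
      rw [Finset.sum_congr rfl (fun m _ => hpair m)]
      rw [← Finset.smul_sum]
      congr 1
      rw [Finset.sum_add_distrib]
      congr 1
      rw [Finset.mul_sum, Finset.sum_mul]
    rw [ih ht] at h2
    have hPG : P (t+1) * (((2 : ℂ) ^ (τ - 1 - t)) • (1 : Matrix (Fin d) (Fin d) ℂ)) * P (t+1)
        = ((2 : ℂ) ^ (τ - 1 - t)) • (1 : Matrix (Fin d) (Fin d) ℂ) := by
      rw [mul_smul_comm, smul_mul_assoc, mul_one, hinv (t+1)]
    rw [hPG] at h2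
    have hexp : τ - 1 - t = (τ - 1 - (t+1)) + 1 := by omega
    have h3 : (2 : ℂ) • (∑ m : Fin τ → ℤˣ, F m)
        = ((2 : ℂ) ^ (τ - 1 - t)) • (1 : Matrix (Fin d) (Fin d) ℂ) := by
      rw [two_smul, h2]
      rw [show ((2:ℂ)^(τ-1-t) • (1 : Matrix (Fin d) (Fin d) ℂ) + (2:ℂ)^(τ-1-t) • 1)
        = ((2:ℂ) * 2^(τ-1-t)) • 1 by rw [← add_smul]; ring_nf]
      rw [smul_smul]
      norm_num
      rw [show (1/2 * (2 * (2:ℂ)^(τ-1-t))) = 2^(τ-1-t) by ring]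
    have h4 := congrArg (fun X => (2⁻¹ : ℂ) • X) h3
    simp only [smul_smul] at h4
    have hc : (2⁻¹ : ℂ) * 2 = 1 := by norm_num
    rw [hc, one_smul] at h4
    rw [h4]
    congr 1
    rw [hexp, pow_succ]
    field_simp
end channel

section final

lemma self_mul_self {τ : ℕ} (m : Fin τ → ℤˣ) : m * m = 1 := by
  funext j; exact Int.units_mul_self (m j)

lemma Ehat_eq_Etr {τ : ℕ} (ε : ℕ → ℕ → ℤˣ) (hτ : 1 ≤ τ) : Ehat τ ε = Etr τ ε (τ - 1) := by
  unfold Ehat Etr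
  congr 1
  ext x
  constructor
  · rintro ⟨i, rfl⟩
    exact ⟨i, by omega, rfl⟩
  · rintro ⟨i, _, rfl⟩
    exact ⟨i, rfl⟩

lemma trunc_self {τ : ℕ} (s : Fin τ → ℤˣ) : trunc τ (τ - 1) s = s := by
  funext j
  have : (j : ℕ) ≤ τ - 1 := by omega
  simp [trunc, this]


/-- for traceless measured Pauli operators, the total probability
of the sum outcome `s = m·m̄` is `1/|Ê|` if `s ∈ Ê` and `0` otherwise; in
particular `s` can occur with nonzero probability only if `s ∈ Ê`. -/
theorem sum_prob_eq_inv_card_Ehat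
    {d τ : ℕ} (hd : 1 ≤ d) (hτ : 1 ≤ τ)
    (P : ℕ → Matrix (Fin d) (Fin d) ℂ)
    (hherm : ∀ j, (P j)ᴴ = P j)
    (hinv : ∀ j, P j * P j = 1)
    (ε : ℕ → ℕ → ℤˣ)
    (hεdiag : ∀ i, ε i i = 1)
    (hεsymm : ∀ i j, ε i j = ε j i)
    (hcomm : ∀ i j, P i * P j = signC (ε i j) • (P j * P i))
    (htr : ∀ j, Matrix.trace (P j) = 0)
    (s : Fin τ → ℤˣ) :
    (∑ m : Fin τ → ℤˣ, Prob d τ P m (m * s)) =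
      if s ∈ Ehat τ ε then ((Nat.card (Ehat τ ε) : ℂ))⁻¹ else 0 := by
  have hτ1 : τ - 1 < τ := by omega
  set A : (Fin τ → ℤˣ) → Matrix (Fin d) (Fin d) ℂ :=
    fun m => PiOp P (extSign τ m) (τ - 1) with hA
  set rho : (Fin τ → ℤˣ) → Matrix (Fin d) (Fin d) ℂ := fun m => A m * (A m)ᴴ with hrho
  -- (Ka) vanishing off Ehat
  have hKa : ∀ m mb : Fin τ → ℤˣ, (m * mb) ∉ Ehat τ ε → Prob d τ P m mb = 0 := by
    intro m mb hout
    have h0 : (A mb)ᴴ * A m = 0 := by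
      apply V_lemma ε hherm hinv hεdiag hcomm (τ - 1) hτ1 m mb
      rw [trunc_self, ← Ehat_eq_Etr ε hτ]
      exact hout
    unfold Prob
    rw [mul_assoc ((PiOp P (extSign τ m) (τ - 1))ᴴ * PiOp P (extSign τ mb) (τ - 1))]
    rw [show (PiOp P (extSign τ mb) (τ - 1))ᴴ * PiOp P (extSign τ m) (τ - 1) = 0 from h0]
    simp
  -- (Kb) Prob as trace of rho * rho
  have hKb : ∀ m mb : Fin τ → ℤˣ,
      Prob d τ P m mb = (d : ℂ)⁻¹ * Matrix.trace (rho m * rho mb) := by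
    intro m mb
    unfold Prob
    congr 1
    rw [Matrix.trace_mul_comm]
    rw [hrho, hA]
    noncomm_ring
  -- (Kc) coset invariance
  have hKc : ∀ s' ∈ Ehat τ ε, ∀ m : Fin τ → ℤˣ,
      Prob d τ P m (m * s') = (d : ℂ)⁻¹ * Matrix.trace (rho m * rho m) := by
    intro s' hs' m
    rw [hKb]
    have h2 : rho (m * s') = rho m := by
      simp only [hrho]
      exact rho_coset ε hherm hinv hεdiag hcomm hτ s' hs' m
    rw [h2]
  -- sum of rho = 1
  have hU : ∑ mb : Fin τ → ℤˣ, rho mb = 1 := by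
    have := sum_rho hherm hinv (τ - 1) hτ1
    rw [Nat.sub_self, pow_zero, one_smul] at this
    exact this
  -- (Kd) marginal
  have hKd : ∀ m : Fin τ → ℤˣ,
      ∑ mb : Fin τ → ℤˣ, Prob d τ P m mb = (d : ℂ)⁻¹ * Matrix.trace (rho m) := by
    intro m
    have h1 : ∀ mb, Prob d τ P m mb
        = (d : ℂ)⁻¹ * Matrix.trace ((A m)ᴴ * rho mb * A m) := by
      intro mb
      unfold Prob
      rw [hrho, hA]
      congr 2
      noncomm_ring
    calc ∑ mb : Fin τ → ℤˣ, Prob d τ P m mb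
        = (d : ℂ)⁻¹ * Matrix.trace ((A m)ᴴ * (∑ mb : Fin τ → ℤˣ, rho mb) * A m) := by
          rw [Finset.mul_sum, Finset.sum_mul, Matrix.trace_sum, Finset.mul_sum]
          exact Finset.sum_congr rfl (fun mb _ => h1 mb)
      _ = (d : ℂ)⁻¹ * Matrix.trace (rho m) := by
          rw [hU, mul_one, Matrix.trace_mul_comm]
  -- (Ke) total sum is 1
  have hKe : ∑ m : Fin τ → ℤˣ, ∑ mb : Fin τ → ℤˣ, Prob d τ P m mb = 1 := by
    rw [Finset.sum_congr rfl (fun m _ => hKd m)]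
    rw [← Finset.mul_sum, ← Matrix.trace_sum, hU, Matrix.trace_one]
    have hdne : (d : ℂ) ≠ 0 := Nat.cast_ne_zero.mpr (by omega)
    simp [Finset.card_univ]
    field_simp
  -- (Kf) reindex
  have hKf : ∀ m : Fin τ → ℤˣ,
      ∑ s' : Fin τ → ℤˣ, Prob d τ P m (m * s') = ∑ mb : Fin τ → ℤˣ, Prob d τ P m mb := by
    intro m
    exact Fintype.sum_equiv (Equiv.mulLeft m) _ _ (fun s' => rfl)
  -- total of p over all s'
  set p : (Fin τ → ℤˣ) → ℂ := fun s' => ∑ m : Fin τ → ℤˣ, Prob d τ P m (m * s') with hp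
  have hptot : ∑ s' : Fin τ → ℤˣ, p s' = 1 := by
    rw [hp]
    simp only []
    rw [Finset.sum_comm]
    rw [Finset.sum_congr rfl (fun m _ => hKf m)]
    exact hKe
  set T0 : ℂ := ∑ m : Fin τ → ℤˣ, (d : ℂ)⁻¹ * Matrix.trace (rho m * rho m) with hT0
  have hpmem : ∀ s' ∈ Ehat τ ε, p s' = T0 := by
    intro s' hs'
    rw [hp, hT0]
    exact Finset.sum_congr rfl (fun m _ => hKc s' hs' m)
  have hpout : ∀ s', s' ∉ Ehat τ ε → p s' = 0 := by
    intro s' hs'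
    rw [hp]
    apply Finset.sum_eq_zero
    intro m _
    apply hKa
    rwa [← mul_assoc, self_mul_self, one_mul]
  -- cardinality
  have hcard : ((Finset.univ.filter (fun x : Fin τ → ℤˣ => x ∈ Ehat τ ε)).card : ℂ)
      = (Nat.card (Ehat τ ε) : ℂ) := by
    congr 1
    rw [Nat.card_eq_fintype_card, Fintype.card_subtype]
  have hsplit : (1 : ℂ) = (Nat.card (Ehat τ ε) : ℂ) * T0 := by
    rw [← hptot, ← Finset.sum_filter_add_sum_filter_not Finset.univ
      (fun x : Fin τ → ℤˣ => x ∈ Ehat τ ε) p]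
    rw [Finset.sum_congr rfl (fun x hx => hpmem x (Finset.mem_filter.mp hx).2)]
    rw [Finset.sum_congr rfl (fun x hx => hpout x (Finset.mem_filter.mp hx).2)]
    rw [Finset.sum_const, Finset.sum_const_zero, add_zero, nsmul_eq_mul, hcard]
  have hT0v : T0 = ((Nat.card (Ehat τ ε) : ℂ))⁻¹ :=
    (inv_eq_of_mul_eq_one_right hsplit.symm).symm
  have hgoal : (∑ m : Fin τ → ℤˣ, Prob d τ P m (m * s)) = p s := rfl
  rw [hgoal]
  by_cases hs : s ∈ Ehat τ ε
  · rw [if_pos hs, hpmem s hs, hT0v]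
  · rw [if_neg hs, hpout s hs]
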